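/- For the universal polynomials U_s defined by U_1 = a^{(1)}_0 + b^{(1)}_0·x and U_n = (Σ_{i<n} a^{(n)}_i U_i)·(Σ_{i<n} b^{(n)}_i U_i), write U_s = Σ_i α_i^{(s)}(a,b) x^i where each coefficient α_i^{(s)} is a polynomial in the variables a, b. Then for all s ≥ 1 and all i, the total degree of α_i^{(s)} in the variables a, b is at most (i+1)·2^{2s}. -/

import Mathlib

/-!
Each recursion step multiplies two linear combinations of earlier `U_m` whose coefficients are
single variables. If every coefficient of `x^k` in `U_m` (`m < n`) has total degree at most
`(k + 1)·E` with `E = 4^(n-1)`, then the coefficient of `x^k` in either factor has degree at most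
`1 + (k + 1)·E`, and in the product at most `2 + (k + 2)·E ≤ 4·(k + 1)·E`.
-/

/-- Names of the auxiliary variables `a⁽ʲ⁾ᵢ`, `b⁽ʲ⁾ᵢ` of the universal polynomials. -/
inductive AB where
  | a (j i : ℕ) : AB
  | b (j i : ℕ) : AB

open Polynomial MvPolynomial in
/-- `Us n` is the list `[U_n, U_{n-1}, …, U_1]` of the universal polynomials,
viewed as univariate polynomials in `x` with coefficients in `ℤ[a,b]`.
`U_1 = a⁽¹⁾₀ + b⁽¹⁾₀·x` and
`U_n = (Σ_{i=1}^{n-1} a⁽ⁿ⁾ᵢ U_i)·(Σ_{i=1}^{n-1} b⁽ⁿ⁾ᵢ U_i)`. -/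
noncomputable def Us : ℕ → List (Polynomial (MvPolynomial AB ℤ))
  | 0 => []
  | 1 => [Polynomial.C (MvPolynomial.X (AB.a 1 0)) +
          Polynomial.C (MvPolynomial.X (AB.b 1 0)) * Polynomial.X]
  | (n + 2) =>
      let prev := Us (n + 1)
      ((((List.range (n + 1)).map (fun i =>
            Polynomial.C (MvPolynomial.X (AB.a (n + 2) (i + 1))) * prev.getD (n - i) 0)).sum) *
       (((List.range (n + 1)).map (fun i =>
            Polynomial.C (MvPolynomial.X (AB.b (n + 2) (i + 1))) * prev.getD (n - i) 0)).sum))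
        :: prev

/-- The universal polynomial `U_n` (as a polynomial in `x` over `ℤ[a,b]`). -/
noncomputable def U (n : ℕ) : Polynomial (MvPolynomial AB ℤ) := (Us n).headD 0

open Polynomial

section CoeffDegree

variable {σ R : Type*} [CommRing R]

theorem totalDegree_coeff_sum_C_X_mul_le {ι : Type*} (s : Finset ι) (v : ι → σ)
    (p : ι → (MvPolynomial σ R)[X]) (D : ℕ → ℕ)
    (hp : ∀ i ∈ s, ∀ k, ((p i).coeff k).totalDegree ≤ D k) (k : ℕ) :
    ((∑ i ∈ s, C (MvPolynomial.X (v i)) * p i).coeff k).totalDegree ≤ 1 + D k := by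
  rw [finsetSum_coeff]
  refine MvPolynomial.totalDegree_finsetSum_le fun i hi => ?_
  rw [coeff_C_mul]
  have hX : (MvPolynomial.X (v i) : MvPolynomial σ R).totalDegree ≤ 1 :=
    (MvPolynomial.totalDegree_monomial_le _ _).trans (by simp)
  exact (MvPolynomial.totalDegree_mul _ _).trans (add_le_add hX (hp i hi k))

theorem totalDegree_coeff_mul_le {p q : (MvPolynomial σ R)[X]} {c d E : ℕ}
    (hp : ∀ k, (p.coeff k).totalDegree ≤ c + (k + 1) * E)
    (hq : ∀ k, (q.coeff k).totalDegree ≤ d + (k + 1) * E) (k : ℕ) :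
    ((p * q).coeff k).totalDegree ≤ c + d + (k + 2) * E := by
  rw [coeff_mul]
  refine MvPolynomial.totalDegree_finsetSum_le fun ⟨x, y⟩ hxy => ?_
  rw [Finset.HasAntidiagonal.mem_antidiagonal] at hxy
  calc _ ≤ (c + (x + 1) * E) + (d + (y + 1) * E) :=
        (MvPolynomial.totalDegree_mul _ _).trans (add_le_add (hp x) (hq y))
    _ = c + d + (k + 2) * E := by subst hxy; ring

end CoeffDegree

theorem Us_getD : ∀ n k : ℕ, k < n → (Us n).getD k 0 = U (n - k)
  | 1, 0, _ => rfl
  | n + 2, 0, _ => rfl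
  | n + 2, k + 1, h => by
      rw [show n + 2 - (k + 1) = n + 1 - k by omega, ← Us_getD (n + 1) k (by omega)]
      rfl

theorem U_one : U 1 = C (MvPolynomial.X (AB.a 1 0)) + C (MvPolynomial.X (AB.b 1 0)) * X := rfl

theorem U_add_two (n : ℕ) :
    U (n + 2) =
      (∑ i ∈ Finset.range (n + 1), C (MvPolynomial.X (AB.a (n + 2) (i + 1))) * U (i + 1)) *
        ∑ i ∈ Finset.range (n + 1), C (MvPolynomial.X (AB.b (n + 2) (i + 1))) * U (i + 1) := by
  have hprev : ∀ i ∈ List.range (n + 1), (Us (n + 1)).getD (n - i) 0 = U (i + 1) := by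
    intro i hi
    rw [List.mem_range] at hi
    rw [Us_getD _ _ (by omega), show n + 1 - (n - i) = i + 1 by omega]
  simp only [U, Us, List.headD_cons, List.map_congr_left fun i hi => congrArg _ (hprev i hi)]
  -- a sum over `Finset.range` unfolds definitionally to the sum of the mapped `List.range`
  rfl

theorem totalDegree_coeff_U_one_le (k : ℕ) : ((U 1).coeff k).totalDegree ≤ 1 := by
  rw [U_one]
  rcases k with _ | _ | k <;> simp [coeff_X, MvPolynomial.totalDegree_X]

theorem totalDegree_coeff_U_add_two_le (n E : ℕ)
    (h : ∀ m < n + 1, ∀ k, ((U (m + 1)).coeff k).totalDegree ≤ (k + 1) * E) (k : ℕ) :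
    ((U (n + 2)).coeff k).totalDegree ≤ 2 + (k + 2) * E := by
  have hfactor (v : ℕ → AB) (k : ℕ) :
      ((∑ i ∈ Finset.range (n + 1), C (MvPolynomial.X (v i)) * U (i + 1)).coeff k).totalDegree
        ≤ 1 + (k + 1) * E :=
    totalDegree_coeff_sum_C_X_mul_le _ v _ _ (fun m hm => h m (Finset.mem_range.1 hm)) k
  rw [U_add_two]
  exact totalDegree_coeff_mul_le (hfactor _) (hfactor _) k

theorem totalDegree_coeff_of_universal_general (s : ℕ) (i : ℕ) :
    ((U s).coeff i).totalDegree ≤ (i + 1) * 2 ^ (2 * s) := by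
  induction s using Nat.strong_induction_on generalizing i with
  | _ s ih =>
    match s with
    | 0 => simp [U, Us]
    | 1 => exact (totalDegree_coeff_U_one_le i).trans (by omega)
    | n + 2 =>
      have hprev : ∀ m < n + 1, ∀ k,
          ((U (m + 1)).coeff k).totalDegree ≤ (k + 1) * 2 ^ (2 * (n + 1)) := fun m hm k =>
        (ih (m + 1) (by omega) k).trans
          (Nat.mul_le_mul_left _ (Nat.pow_le_pow_right two_pos (by omega)))
      have hE : 1 ≤ 2 ^ (2 * (n + 1)) := Nat.one_le_two_pow
      calc _ ≤ 2 + (i + 2) * 2 ^ (2 * (n + 1)) := totalDegree_coeff_U_add_two_le n _ hprev i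
        _ ≤ (i + 1) * 2 ^ (2 * (n + 2)) := by
          rw [show 2 * (n + 2) = 2 * (n + 1) + 2 by ring, pow_add]
          nlinarith

theorem totalDegree_coeff_of_universal (s : ℕ) (hs : 1 ≤ s) (i : ℕ) :
    ((U s).coeff i).totalDegree ≤ (i + 1) * 2 ^ (2 * s) :=
  totalDegree_coeff_of_universal_general s i
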